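/- arXiv:2507.13060 — 5 statements merged into one kernel-verified Lean document; each statement's English description precedes it below -/
import Mathlib

section
/- Let r > 1 and let V : ℝ → ℝ be a convex, L-Lipschitz, twice differentiable function whose derivative V' is L-Lipschitz (so 0 ≤ V'' ≤ L and |V'| ≤ L). Set ρ = e^{-(r+1)V} and m = e^{-V}, and fix 0 < c < C. Let λ = c^{-(r+1)} (L²(r+1)²/r + (r+1)L). Then for every probability density f on ℝ with c·m ≤ f ≤ C·m and every smooth compactly supported φ : ℝ → ℝ, one has 2(r+1) ∫ (ρ'(x)/f(x)^r) φ'(x) φ''(x) dx + r(r+1) ∫ (ρ(x)/f(x)^r) φ''(x)² dx + ∫ (ρ''(x)/f(x)^r) φ'(x)² dx ≥ −λ ∫ φ'(x)² f(x) dx. -/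
open MeasureTheory Real

lemma key_ineq (r L c lam mx fx px w u a b : ℝ) (hr : 1 < r) (hL : 0 ≤ L)
    (hw : |w| ≤ L) (hu : u ≤ L) (hc : 0 < c) (hmx : 0 < mx)
    (hfx : c * mx ≤ fx) (hp : px = mx ^ (r + 1))
    (hlam : lam = c ^ (-(r + 1)) * (L ^ 2 * (r + 1) ^ 2 / r + (r + 1) * L)) :
    0 ≤ 2 * (r + 1) * (-(r + 1) * w * px / fx ^ r * a * b)
      + r * (r + 1) * (px / fx ^ r * b ^ 2)
      + (((r + 1) ^ 2 * w ^ 2 - (r + 1) * u) * px / fx ^ r * a ^ 2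
      + lam * (a ^ 2 * fx)) := by
  have hr0 : (0:ℝ) < r := by linarith
  have hfx0 : 0 < fx := lt_of_lt_of_le (mul_pos hc hmx) hfx
  have hfr0 : 0 < fx ^ r := Real.rpow_pos_of_pos hfx0 r
  have hp0 : 0 < px := hp ▸ Real.rpow_pos_of_pos hmx _
  have hg0 : 0 ≤ px / fx ^ r := le_of_lt (div_pos hp0 hfr0)
  have hcr : (0:ℝ) < c ^ (-(r + 1)) := Real.rpow_pos_of_pos hc _
  -- bound on g = px / fx^r
  have hkey : px ≤ c ^ (-(r + 1)) * fx * fx ^ r := by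
    have h1 : (c * mx) ^ r ≤ fx ^ r := Real.rpow_le_rpow (by positivity) hfx hr0.le
    have h2 : c ^ (-(r + 1)) * (c * mx) * ((c * mx) ^ r)
        ≤ c ^ (-(r + 1)) * fx * fx ^ r := by
      apply mul_le_mul (mul_le_mul_of_nonneg_left hfx hcr.le) h1 (by positivity)
      positivity
    have h3 : c ^ (-(r + 1)) * (c * mx) * ((c * mx) ^ r) = px := by
      rw [Real.mul_rpow hc.le hmx.le, hp, Real.rpow_add hmx, Real.rpow_one]
      have e : c ^ (-(r + 1)) * c ^ (1:ℝ) * c ^ r = 1 := by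
        rw [← Real.rpow_add hc, ← Real.rpow_add hc]
        norm_num
      calc c ^ (-(r + 1)) * (c * mx) * (c ^ r * mx ^ r)
          = (c ^ (-(r + 1)) * c ^ (1:ℝ) * c ^ r) * (mx ^ r * mx) := by
            rw [Real.rpow_one]; ring
        _ = mx ^ r * mx := by rw [e, one_mul]
    linarith [h3 ▸ h2]
  have hgle : px / fx ^ r ≤ c ^ (-(r + 1)) * fx := by
    rw [div_le_iff₀ hfr0]; linarith
  have hw2 : w ^ 2 ≤ L ^ 2 := by
    have h := abs_le.mp hw
    nlinarith [h.1, h.2]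
  have hB0 : 0 ≤ L ^ 2 * (r + 1) ^ 2 / r + (r + 1) * L := by positivity
  have hstuff : (r + 1) ^ 2 * w ^ 2 / r + (r + 1) * u
      ≤ L ^ 2 * (r + 1) ^ 2 / r + (r + 1) * L := by
    have h1 : (r + 1) ^ 2 * w ^ 2 / r ≤ (r + 1) ^ 2 * L ^ 2 / r := by
      gcongr
    have h2 : (r + 1) * u ≤ (r + 1) * L := by nlinarith
    have h3 : (r + 1) ^ 2 * L ^ 2 / r = L ^ 2 * (r + 1) ^ 2 / r := by ring
    linarith
  have hmain : (px / fx ^ r) * ((r + 1) ^ 2 * w ^ 2 / r + (r + 1) * u) ≤ lam * fx := by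
    calc (px / fx ^ r) * ((r + 1) ^ 2 * w ^ 2 / r + (r + 1) * u)
        ≤ (px / fx ^ r) * (L ^ 2 * (r + 1) ^ 2 / r + (r + 1) * L) :=
          mul_le_mul_of_nonneg_left hstuff hg0
      _ ≤ (c ^ (-(r + 1)) * fx) * (L ^ 2 * (r + 1) ^ 2 / r + (r + 1) * L) :=
          mul_le_mul_of_nonneg_right hgle hB0
      _ = lam * fx := by rw [hlam]; ring
  have hsq : 0 ≤ r * (r + 1) * (px / fx ^ r) * (b - (r + 1) * w * a / r) ^ 2 := by positivity
  have hid : 2 * (r + 1) * (-(r + 1) * w * px / fx ^ r * a * b)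
      + r * (r + 1) * (px / fx ^ r * b ^ 2)
      + (((r + 1) ^ 2 * w ^ 2 - (r + 1) * u) * px / fx ^ r * a ^ 2
      + lam * (a ^ 2 * fx))
      = r * (r + 1) * (px / fx ^ r) * (b - (r + 1) * w * a / r) ^ 2
        + a ^ 2 * (lam * fx - (px / fx ^ r) * ((r + 1) ^ 2 * w ^ 2 / r + (r + 1) * u)) := by
    field_simp
    ring
  rw [hid]
  have := mul_nonneg (sq_nonneg a) (sub_nonneg.mpr hmain)
  linarith

/-- Lower bound on the Wasserstein Hessian form of F_ρ at f ∈ P_{c,C},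
with explicit constant λ = c^{-(r+1)} (L²(r+1)²/r + (r+1)L). -/
theorem hessian_lower_bound
    (r : ℝ) (hr : 1 < r) (V : ℝ → ℝ) (L : NNReal)
    (hVconv : ConvexOn ℝ Set.univ V)
    (hVlip : LipschitzWith L V)
    (hVdiff : Differentiable ℝ V)
    (hV'diff : Differentiable ℝ (deriv V))
    (hV'lip : LipschitzWith L (deriv V))
    (m ρ : ℝ → ℝ)
    (hm : m = fun x => Real.exp (-V x))
    (hρ : ρ = fun x => Real.exp (-(r + 1) * V x))
    (c C : ℝ) (hc : 0 < c) (hcC : c < C)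
    (lam : ℝ)
    (hlam : lam = c ^ (-(r + 1)) * ((L : ℝ) ^ 2 * (r + 1) ^ 2 / r + (r + 1) * L)) :
    ∀ f : ℝ → ℝ, (∫ x, f x = 1) →
      (∀ x : ℝ, c * m x ≤ f x ∧ f x ≤ C * m x) →
      ∀ φ : ℝ → ℝ, ContDiff ℝ (⊤ : ℕ∞) φ → HasCompactSupport φ →
      -lam * ∫ x, (deriv φ x) ^ 2 * f x ≤
        2 * (r + 1) * (∫ x, (deriv ρ x / (f x) ^ r) * deriv φ x * deriv (deriv φ) x) +
        r * (r + 1) * (∫ x, (ρ x / (f x) ^ r) * (deriv (deriv φ) x) ^ 2) +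
        ∫ x, (deriv (deriv ρ) x / (f x) ^ r) * (deriv φ x) ^ 2 := by
  intro f hfint hfb φ hφ hφc
  -- basic positivity and continuity facts
  have hm_pos : ∀ x, 0 < m x := fun x => by rw [hm]; exact Real.exp_pos _
  have hρ_pos : ∀ x, 0 < ρ x := fun x => by rw [hρ]; exact Real.exp_pos _
  have hf_pos : ∀ x, 0 < f x := fun x =>
    lt_of_lt_of_le (mul_pos hc (hm_pos x)) (hfb x).1
  have hmc : Continuous m := by rw [hm]; exact Real.continuous_exp.comp hVdiff.continuous.neg
  have hρc : Continuous ρ := by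
    rw [hρ]; exact Real.continuous_exp.comp (continuous_const.mul hVdiff.continuous)
  have hV'c : Continuous (deriv V) := hV'diff.continuous
  have hρm : ∀ x, ρ x = m x ^ (r + 1) := by
    intro x
    rw [hm, hρ]
    simp only
    rw [← Real.exp_mul]
    ring_nf
  -- derivatives of ρ
  have hρd : ∀ x, HasDerivAt ρ (-(r + 1) * deriv V x * ρ x) x := by
    intro x
    have h := (((hVdiff x).hasDerivAt.const_mul (-(r + 1))).exp)
    have e : ρ = fun y => Real.exp (-(r + 1) * V y) := hρ
    rw [e]
    convert h using 1
    simp only [hρ]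
    ring
  have hderρ : deriv ρ = fun x => -(r + 1) * deriv V x * ρ x :=
    funext fun x => (hρd x).deriv
  have hρ'd : ∀ x, HasDerivAt (deriv ρ)
      (((r + 1) ^ 2 * (deriv V x) ^ 2 - (r + 1) * deriv (deriv V) x) * ρ x) x := by
    intro x
    rw [hderρ]
    have h1 : HasDerivAt (fun y => -(r + 1) * deriv V y) (-(r + 1) * deriv (deriv V) x) x :=
      (hV'diff x).hasDerivAt.const_mul _
    have h2 : HasDerivAt (fun y => -(r + 1) * deriv V y * ρ y)
        (-(r + 1) * deriv (deriv V) x * ρ x + -(r + 1) * deriv V x * (-(r + 1) * deriv V x * ρ x)) x :=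
      h1.mul (hρd x)
    convert h2 using 1
    ring
  have hderρ2 : ∀ x, deriv (deriv ρ) x
      = ((r + 1) ^ 2 * (deriv V x) ^ 2 - (r + 1) * deriv (deriv V) x) * ρ x :=
    fun x => (hρ'd x).deriv
  have hderρc : Continuous (deriv ρ) := by
    rw [hderρ]
    exact ((continuous_const.mul hV'c).mul hρc)
  -- Lipschitz bounds
  have hV'b : ∀ x, |deriv V x| ≤ (L : ℝ) := fun x => by
    simpa [Real.norm_eq_abs] using norm_deriv_le_of_lipschitz hVlip
  have hV''b : ∀ x, |deriv (deriv V) x| ≤ (L : ℝ) := fun x => by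
    simpa [Real.norm_eq_abs] using norm_deriv_le_of_lipschitz hV'lip
  -- smoothness of φ
  have hφ' : ContDiff ℝ (⊤ : ℕ∞) φ := hφ.of_le (by simp)
  have hφd := (contDiff_infty_iff_deriv.mp hφ').2
  have hφ1c : Continuous (deriv φ) := hφd.continuous
  have hφ2c : Continuous (deriv (deriv φ)) := (contDiff_infty_iff_deriv.mp hφd).2.continuous
  have hφ1s : HasCompactSupport (deriv φ) := hφc.deriv
  have hφ2s : HasCompactSupport (deriv (deriv φ)) := hφ1s.deriv
  -- integrability of f
  have hf_int : Integrable f := by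
    by_contra h
    rw [integral_undef h] at hfint
    norm_num at hfint
  have hfm : AEMeasurable f := hf_int.aemeasurable
  have hrpowc : Continuous (fun y : ℝ => y ^ r) :=
    Continuous.rpow_const continuous_id (fun _ => Or.inr (by linarith))
  have hfrm : AEMeasurable (fun x => f x ^ r) := hrpowc.measurable.comp_aemeasurable hfm
  -- the dominating function G
  set G : ℝ → ℝ := fun x => ((c * m x) ^ r)⁻¹ with hG
  have hGc : Continuous G := by
    apply Continuous.inv₀
    · exact Continuous.rpow_const (continuous_const.mul hmc) (fun x => Or.inr (by linarith))
    · intro x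
      exact ne_of_gt (Real.rpow_pos_of_pos (mul_pos hc (hm_pos x)) r)
  have hGb : ∀ x, (f x ^ r)⁻¹ ≤ G x := by
    intro x
    exact inv_anti₀ (Real.rpow_pos_of_pos (mul_pos hc (hm_pos x)) r)
      (Real.rpow_le_rpow (le_of_lt (mul_pos hc (hm_pos x))) (hfb x).1 (by linarith))
  have hfr_pos : ∀ x, 0 < f x ^ r := fun x => Real.rpow_pos_of_pos (hf_pos x) r
  have hG_pos : ∀ x, 0 < G x := fun x =>
    inv_pos.mpr (Real.rpow_pos_of_pos (mul_pos hc (hm_pos x)) r)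
  -- integrability of the four integrands
  have habs2 : HasCompactSupport (fun x => |deriv (deriv φ) x|) :=
    hφ2s.comp_left (g := abs) abs_zero
  have habs1 : HasCompactSupport (fun x => |deriv φ x|) :=
    hφ1s.comp_left (g := abs) abs_zero
  have hsq2 : HasCompactSupport (fun x => (deriv (deriv φ) x) ^ 2) :=
    hφ2s.comp_left (g := fun y => y ^ 2) (by norm_num)
  have hsq1 : HasCompactSupport (fun x => (deriv φ x) ^ 2) :=
    hφ1s.comp_left (g := fun y => y ^ 2) (by norm_num)
  -- integrand 1
  have int₁ : Integrable (fun x => deriv ρ x / f x ^ r * deriv φ x * deriv (deriv φ) x) := by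
    apply Integrable.mono'
      (g := fun x => (|deriv ρ x| * G x * |deriv φ x|) * |deriv (deriv φ) x|)
    · apply Continuous.integrable_of_hasCompactSupport
      · exact ((hderρc.abs.mul hGc).mul hφ1c.abs).mul hφ2c.abs
      · exact HasCompactSupport.mul_left habs2
    · exact ((((measurable_deriv ρ).aemeasurable.div hfrm).mul
        hφ1c.measurable.aemeasurable).mul hφ2c.measurable.aemeasurable).aestronglyMeasurable
    · refine Filter.Eventually.of_forall (fun x => ?_)
      rw [Real.norm_eq_abs, abs_mul, abs_mul, abs_div, abs_of_pos (hfr_pos x),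
        div_eq_mul_inv]
      have h1 : |deriv ρ x| * (f x ^ r)⁻¹ ≤ |deriv ρ x| * G x :=
        mul_le_mul_of_nonneg_left (hGb x) (abs_nonneg _)
      have h2 : 0 ≤ |deriv φ x| := abs_nonneg _
      have h3 : 0 ≤ |deriv (deriv φ) x| := abs_nonneg _
      nlinarith [mul_le_mul_of_nonneg_right (mul_le_mul_of_nonneg_right h1 h2) h3]
  -- integrand 2
  have int₂ : Integrable (fun x => ρ x / f x ^ r * (deriv (deriv φ) x) ^ 2) := by
    apply Integrable.mono'
      (g := fun x => (ρ x * G x) * (deriv (deriv φ) x) ^ 2)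
    · apply Continuous.integrable_of_hasCompactSupport
      · exact (hρc.mul hGc).mul (hφ2c.pow 2)
      · exact HasCompactSupport.mul_left hsq2
    · exact ((hρc.measurable.aemeasurable.div hfrm).mul
        ((hφ2c.pow 2).measurable.aemeasurable)).aestronglyMeasurable
    · refine Filter.Eventually.of_forall (fun x => ?_)
      rw [Real.norm_eq_abs, abs_mul, abs_div, abs_of_pos (hfr_pos x),
        abs_of_pos (hρ_pos x), abs_of_nonneg (sq_nonneg _), div_eq_mul_inv]
      have h1 : ρ x * (f x ^ r)⁻¹ ≤ ρ x * G x :=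
        mul_le_mul_of_nonneg_left (hGb x) (le_of_lt (hρ_pos x))
      nlinarith [mul_le_mul_of_nonneg_right h1 (sq_nonneg (deriv (deriv φ) x))]
  -- integrand 3
  have hB' : ∀ x, |deriv (deriv ρ) x| ≤ ((r + 1) ^ 2 * (L : ℝ) ^ 2 + (r + 1) * L) * ρ x := by
    intro x
    rw [hderρ2 x, abs_mul, abs_of_pos (hρ_pos x)]
    apply mul_le_mul_of_nonneg_right _ (le_of_lt (hρ_pos x))
    have hw := abs_le.mp (hV'b x)
    have hu := abs_le.mp (hV''b x)
    have hw2 : (deriv V x) ^ 2 ≤ (L : ℝ) ^ 2 := by nlinarith [hw.1, hw.2]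
    have h1 : (r + 1) ^ 2 * (deriv V x) ^ 2 ≤ (r + 1) ^ 2 * (L : ℝ) ^ 2 :=
      mul_le_mul_of_nonneg_left hw2 (sq_nonneg _)
    have h2 : -((r + 1) * deriv (deriv V) x) ≤ (r + 1) * (L : ℝ) := by nlinarith [hu.1]
    have h3 : (r + 1) * deriv (deriv V) x ≤ (r + 1) * (L : ℝ) := by nlinarith [hu.2]
    rw [abs_le]
    constructor
    · nlinarith [sq_nonneg (deriv V x), sq_nonneg (r + 1), L.coe_nonneg, hr]
    · linarith
  have int₃ : Integrable (fun x => deriv (deriv ρ) x / f x ^ r * (deriv φ x) ^ 2) := by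
    apply Integrable.mono'
      (g := fun x => ((((r + 1) ^ 2 * (L : ℝ) ^ 2 + (r + 1) * L) * ρ x) * G x) * (deriv φ x) ^ 2)
    · apply Continuous.integrable_of_hasCompactSupport
      · exact (((continuous_const.mul hρc)).mul hGc).mul (hφ1c.pow 2)
      · exact HasCompactSupport.mul_left hsq1
    · exact (((measurable_deriv (deriv ρ)).aemeasurable.div hfrm).mul
        ((hφ1c.pow 2).measurable.aemeasurable)).aestronglyMeasurable
    · refine Filter.Eventually.of_forall (fun x => ?_)
      rw [Real.norm_eq_abs, abs_mul, abs_div, abs_of_pos (hfr_pos x),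
        abs_of_nonneg (sq_nonneg (deriv φ x)), div_eq_mul_inv]
      have h1 : |deriv (deriv ρ) x| * (f x ^ r)⁻¹
          ≤ (((r + 1) ^ 2 * (L : ℝ) ^ 2 + (r + 1) * L) * ρ x) * G x := by
        apply mul_le_mul (hB' x) (hGb x) (inv_nonneg.mpr (le_of_lt (hfr_pos x)))
        exact mul_nonneg (by nlinarith [L.coe_nonneg, hr, sq_nonneg ((r + 1) * (L : ℝ))])
          (le_of_lt (hρ_pos x))
      nlinarith [mul_le_mul_of_nonneg_right h1 (sq_nonneg (deriv φ x))]
  -- integrand 0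
  have int₀ : Integrable (fun x => (deriv φ x) ^ 2 * f x) := by
    apply Integrable.mono' (g := fun x => (C * m x) * (deriv φ x) ^ 2)
    · apply Continuous.integrable_of_hasCompactSupport
      · exact (continuous_const.mul hmc).mul (hφ1c.pow 2)
      · exact HasCompactSupport.mul_left hsq1
    · exact (((hφ1c.pow 2).measurable.aemeasurable).mul hfm).aestronglyMeasurable
    · refine Filter.Eventually.of_forall (fun x => ?_)
      rw [Real.norm_eq_abs, abs_mul, abs_of_nonneg (sq_nonneg _),
        abs_of_pos (hf_pos x)]
      nlinarith [sq_nonneg (deriv φ x), (hfb x).2, hf_pos x]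
  -- the combined integrand is pointwise nonnegative
  have hnonneg : 0 ≤ ∫ x,
      (2 * (r + 1) * (deriv ρ x / f x ^ r * deriv φ x * deriv (deriv φ) x)
      + r * (r + 1) * (ρ x / f x ^ r * (deriv (deriv φ) x) ^ 2)
      + (deriv (deriv ρ) x / f x ^ r * (deriv φ x) ^ 2
      + lam * ((deriv φ x) ^ 2 * f x))) := by
    apply integral_nonneg
    intro x
    simp only [Pi.zero_apply]
    have e1 : deriv ρ x = -(r + 1) * deriv V x * ρ x := by rw [hderρ]
    rw [e1, hderρ2 x]
    exact key_ineq r L c lam (m x) (f x) (ρ x) (deriv V x) (deriv (deriv V) x)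
      (deriv φ x) (deriv (deriv φ) x) hr L.coe_nonneg (hV'b x)
      (le_of_abs_le (hV''b x)) hc (hm_pos x) (hfb x).1 (hρm x) hlam
  -- split the integral
  have intA : Integrable (fun x =>
      2 * (r + 1) * (deriv ρ x / f x ^ r * deriv φ x * deriv (deriv φ) x)) :=
    int₁.const_mul _
  have intB : Integrable (fun x =>
      r * (r + 1) * (ρ x / f x ^ r * (deriv (deriv φ) x) ^ 2)) :=
    int₂.const_mul _
  have intD : Integrable (fun x => lam * ((deriv φ x) ^ 2 * f x)) := int₀.const_mul _
  have intAB : Integrable (fun x =>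
      2 * (r + 1) * (deriv ρ x / f x ^ r * deriv φ x * deriv (deriv φ) x)
      + r * (r + 1) * (ρ x / f x ^ r * (deriv (deriv φ) x) ^ 2)) := intA.add intB
  have intCD : Integrable (fun x =>
      deriv (deriv ρ) x / f x ^ r * (deriv φ x) ^ 2
      + lam * ((deriv φ x) ^ 2 * f x)) := int₃.add intD
  rw [integral_add intAB intCD, integral_add intA intB, integral_add int₃ intD,
    integral_const_mul, integral_const_mul, integral_const_mul] at hnonneg
  linarith [hnonneg]
end

section
/- Let V : ℝ → ℝ be convex, L-Lipschitz, and continuously differentiable, with e^{-V} a probability density on ℝ. Then there exists a constant C_V > 0, depending only on V, such that for all x ∈ ℝ: C_V^{-1} · min(∫_{-∞}^x e^{-V(y)} dy, ∫_x^∞ e^{-V(y)} dy) ≤ e^{-V(x)} ≤ C_V · min(∫_{-∞}^x e^{-V(y)} dy, ∫_x^∞ e^{-V(y)} dy). -/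
/-!
Upper bound: by the Lipschitz bound, `V ≤ V x + L` on `[x - 1, x + 1]`, so each half-line
through `x` carries mass at least `e^{-L} e^{-V x}` already on its unit interval at `x`.

Lower bound: integrability of `e^{-V}` forces `V` to increase somewhere on each side, so by
convexity `V` grows at least linearly with some slope `s > 0` beyond a point `p`; comparing
with `e^{-V x - s (y - x)}` gives tail mass at most `e^{-V x} / s` for `x ≥ p`, and symmetrically
on the left of some `q`. On `[q, p]` the convex `V` is bounded by `max (V q) (V p)`, and the
total mass bounds the minimum there.
-/

open MeasureTheory Real Set Filter Topology

section

variable {V : ℝ → ℝ}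

lemma setIntegral_Ici_exp_neg_le_of_slope {x s : ℝ} (hs : 0 < s)
    (hslope : ∀ y, x ≤ y → V x + s * (y - x) ≤ V y) :
    ∫ y in Ici x, exp (-V y) ≤ exp (-V x) / s := by
  have hdom : IntegrableOn (fun y => exp (-V x + s * x) * exp (-s * y)) (Ioi x) :=
    (integrableOn_exp_mul_Ioi (neg_lt_zero.mpr hs) x).const_mul _
  calc ∫ y in Ici x, exp (-V y)
      = ∫ y in Ioi x, exp (-V y) := integral_Ici_eq_integral_Ioi
    _ ≤ ∫ y in Ioi x, exp (-V x + s * x) * exp (-s * y) := by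
        refine integral_mono_of_nonneg (.of_forall fun _ => (exp_pos _).le) hdom ?_
        refine (ae_restrict_iff' measurableSet_Ioi).mpr (.of_forall fun y hy => ?_)
        simp only [← exp_add, exp_le_exp]
        linarith [hslope y (le_of_lt hy)]
    _ = exp (-V x) / s := by
        rw [integral_const_mul, integral_exp_mul_Ioi (neg_lt_zero.mpr hs), neg_div_neg_eq,
          mul_div_assoc', ← exp_add]
        ring_nf

lemma ConvexOn.add_slope_mul_le (hV : ConvexOn ℝ univ V) {a b x y : ℝ} (hab : a < b)
    (hbx : b ≤ x) (hxy : x ≤ y) :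
    V x + (V b - V a) / (b - a) * (y - x) ≤ V y := by
  rcases hxy.eq_or_lt with rfl | hxy
  · simp
  have hax : a < x := hab.trans_le hbx
  have hsecant : (V b - V a) / (b - a) ≤ (V x - V a) / (x - a) :=
    hV.secant_mono trivial trivial trivial hab.ne' hax.ne' hbx
  have hadjacent : (V x - V a) / (x - a) ≤ (V y - V x) / (y - x) :=
    hV.slope_mono_adjacent trivial trivial hax hxy
  have := (le_div_iff₀ (sub_pos.mpr hxy)).mp (hsecant.trans hadjacent)
  linarith

lemma exists_gt_lt_of_integrableOn_exp_neg (a : ℝ)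
    (hint : IntegrableOn (fun y => exp (-V y)) (Ioi a)) : ∃ b > a, V a < V b := by
  by_contra! hle
  have hconst : IntegrableOn (fun _ => exp (-V a)) (Ioi a) := by
    refine hint.mono' aestronglyMeasurable_const ?_
    refine (ae_restrict_iff' measurableSet_Ioi).mpr (.of_forall fun y hy => ?_)
    rw [norm_of_nonneg (exp_pos _).le, exp_le_exp, neg_le_neg_iff]
    exact hle y hy
  rw [IntegrableOn, integrable_const_iff, isFiniteMeasure_restrict, volume_Ioi] at hconst
  exact hconst.elim (exp_pos _).ne' (· rfl)

lemma ConvexOn.exists_setIntegral_Ici_le (hV : ConvexOn ℝ univ V)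
    (hint : Integrable fun y => exp (-V y)) :
    ∃ p, ∃ C > 0, ∀ x, p ≤ x → ∫ y in Ici x, exp (-V y) ≤ C * exp (-V x) := by
  obtain ⟨b, hb, hVb⟩ := exists_gt_lt_of_integrableOn_exp_neg 0 hint.integrableOn
  have hs : 0 < (V b - V 0) / (b - 0) := div_pos (by linarith) (by linarith)
  refine ⟨b, _, inv_pos.mpr hs, fun x hx => ?_⟩
  rw [inv_mul_eq_div]
  exact setIntegral_Ici_exp_neg_le_of_slope hs fun y => hV.add_slope_mul_le hb hx

lemma ConvexOn.exists_setIntegral_Iic_le (hV : ConvexOn ℝ univ V)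
    (hint : Integrable fun y => exp (-V y)) :
    ∃ q, ∃ C > 0, ∀ x, x ≤ q → ∫ y in Iic x, exp (-V y) ≤ C * exp (-V x) := by
  have hV' : ConvexOn ℝ univ (fun y => V (-y)) := by
    simpa [Function.comp_def] using hV.comp_linearMap (-LinearMap.id)
  obtain ⟨p, C, hC, hp⟩ := hV'.exists_setIntegral_Ici_le hint.comp_neg
  refine ⟨-p, C, hC, fun x hx => ?_⟩
  have := hp (-x) (le_neg_of_le_neg hx)
  rw [integral_Ici_eq_integral_Ioi, ← integral_comp_neg_Iic] at this
  simpa only [neg_neg] using this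

theorem ConvexOn.exists_min_setIntegral_le_mul_exp_neg (hV : ConvexOn ℝ univ V)
    (hint : Integrable fun y => exp (-V y)) :
    ∃ C > 0, ∀ x, min (∫ y in Iic x, exp (-V y)) (∫ y in Ici x, exp (-V y)) ≤
      C * exp (-V x) := by
  obtain ⟨p, Cᵣ, hCr, hright⟩ := hV.exists_setIntegral_Ici_le hint
  obtain ⟨q, Cₗ, hCl, hleft⟩ := hV.exists_setIntegral_Iic_le hint
  set M := ∫ y, exp (-V y)
  refine ⟨max (max Cₗ Cᵣ) (M * exp (max (V q) (V p))),
    lt_max_of_lt_left (lt_max_of_lt_left hCl), fun x => ?_⟩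
  rcases le_or_gt x q with hxq | hqx
  · calc _ ≤ ∫ y in Iic x, exp (-V y) := min_le_left _ _
      _ ≤ Cₗ * exp (-V x) := hleft x hxq
      _ ≤ _ := by gcongr; exact (le_max_left _ _).trans (le_max_left _ _)
  rcases le_or_gt p x with hpx | hxp
  · calc _ ≤ ∫ y in Ici x, exp (-V y) := min_le_right _ _
      _ ≤ Cᵣ * exp (-V x) := hright x hpx
      _ ≤ _ := by gcongr; exact (le_max_right _ _).trans (le_max_left _ _)
  have hVx : V x ≤ max (V q) (V p) :=
    hV.le_on_segment trivial trivial (segment_eq_Icc (hqx.trans hxp).le ▸ ⟨hqx.le, hxp.le⟩)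
  calc _ ≤ ∫ y in Ici x, exp (-V y) := min_le_right _ _
    _ ≤ M := setIntegral_le_integral hint (.of_forall fun _ => (exp_pos _).le)
    _ = M * exp (max (V q) (V p)) * exp (-max (V q) (V p)) := by
        rw [mul_assoc, ← exp_add, add_neg_cancel, exp_zero, mul_one]
    _ ≤ M * exp (max (V q) (V p)) * exp (-V x) := by gcongr
    _ ≤ _ := by gcongr; exact le_max_right _ _

lemma LipschitzWith.exp_neg_le_mul_setIntegral_Icc {L : NNReal} (hV : LipschitzWith L V)
    {a x : ℝ} (hx : x ∈ Icc a (a + 1)) :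
    exp (-V x) ≤ exp L * ∫ y in Icc a (a + 1), exp (-V y) := by
  have hcont : Continuous fun y => exp (-V y) := (hV.continuous.neg).rexp
  have hbound : ∀ y ∈ Icc a (a + 1), exp (-(V x + L)) ≤ exp (-V y) := by
    intro y hy
    have hyx : dist y x ≤ 1 :=
      abs_sub_le_iff.mpr ⟨by linarith [hy.2, hx.1], by linarith [hy.1, hx.2]⟩
    have hVyx : V y - V x ≤ L := (le_abs_self _).trans <|
      (hV.dist_le_mul y x).trans (mul_le_of_le_one_right L.coe_nonneg hyx)
    rw [exp_le_exp]
    linarith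
  calc exp (-V x) = exp L * (volume.real (Icc a (a + 1)) * exp (-(V x + L))) := by
        rw [volume_real_Icc, add_sub_cancel_left, max_eq_left zero_le_one, one_mul,
          ← exp_add]
        ring_nf
    _ ≤ _ := by
        rw [← smul_eq_mul (volume.real _), ← setIntegral_const]
        exact mul_le_mul_of_nonneg_left (setIntegral_mono_on
          (integrableOn_const (measure_Icc_lt_top (μ := volume)).ne) hcont.integrableOn_Icc
          measurableSet_Icc hbound) (exp_pos _).le

theorem LipschitzWith.exp_neg_le_mul_min_setIntegral {L : NNReal} (hV : LipschitzWith L V)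
    (hint : Integrable fun y => exp (-V y)) (x : ℝ) :
    exp (-V x) ≤ exp L * min (∫ y in Iic x, exp (-V y)) (∫ y in Ici x, exp (-V y)) := by
  have hmono {s t : Set ℝ} (hst : s ⊆ t) : ∫ y in s, exp (-V y) ≤ ∫ y in t, exp (-V y) :=
    setIntegral_mono_set hint.integrableOn (.of_forall fun _ => (exp_pos _).le) (.of_forall hst)
  rw [mul_min_of_nonneg _ _ (exp_pos _).le]
  refine le_min ?_ ?_
  · have := hV.exp_neg_le_mul_setIntegral_Icc (a := x - 1) ⟨by linarith, by linarith⟩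
    rw [sub_add_cancel] at this
    exact this.trans <| mul_le_mul_of_nonneg_left (hmono Icc_subset_Iic_self) (exp_pos _).le
  · have := hV.exp_neg_le_mul_setIntegral_Icc (a := x) ⟨le_rfl, by linarith⟩
    exact this.trans <| mul_le_mul_of_nonneg_left (hmono Icc_subset_Ici_self) (exp_pos _).le

end

theorem isoperimetric_profile_two_sided_bound_general
    (V : ℝ → ℝ) (L : NNReal)
    (hVconv : ConvexOn ℝ Set.univ V)
    (hVlip : LipschitzWith L V)
    (hm_int : Integrable (fun x => Real.exp (-V x))) :
    ∃ CV > (0:ℝ), ∀ x : ℝ,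
      CV⁻¹ * min (∫ y in Set.Iic x, Real.exp (-V y)) (∫ y in Set.Ici x, Real.exp (-V y)) ≤
          Real.exp (-V x) ∧
      Real.exp (-V x) ≤
        CV * min (∫ y in Set.Iic x, Real.exp (-V y)) (∫ y in Set.Ici x, Real.exp (-V y)) := by
  obtain ⟨C, hC, hlower⟩ := hVconv.exists_min_setIntegral_le_mul_exp_neg hm_int
  have hCV : 0 < max C (exp L) := lt_max_of_lt_left hC
  refine ⟨max C (exp L), hCV, fun x => ⟨?_, ?_⟩⟩
  · rw [inv_mul_le_iff₀ hCV]
    exact (hlower x).trans <| mul_le_mul_of_nonneg_right (le_max_left _ _) (exp_pos _).le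
  · have hmin : 0 ≤ min (∫ y in Iic x, exp (-V y)) (∫ y in Ici x, exp (-V y)) :=
      le_min (setIntegral_nonneg measurableSet_Iic fun _ _ => (exp_pos _).le)
        (setIntegral_nonneg measurableSet_Ici fun _ _ => (exp_pos _).le)
    exact (hVlip.exp_neg_le_mul_min_setIntegral hm_int x).trans <|
      mul_le_mul_of_nonneg_right (le_max_right _ _) hmin

/-- Two-sided bound on the isoperimetric profile of a convex, Lipschitz,
C¹ potential: e^{-V(x)} is comparable to min(F(x), 1−F(x)) uniformly in x. -/
theorem isoperimetric_profile_two_sided_bound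
    (V : ℝ → ℝ) (L : NNReal)
    (hVconv : ConvexOn ℝ Set.univ V)
    (hVlip : LipschitzWith L V)
    (hVC1 : ContDiff ℝ 1 V)
    (hm_int : Integrable (fun x => Real.exp (-V x)))
    (hmass : ∫ x, Real.exp (-V x) = 1) :
    ∃ CV > (0:ℝ), ∀ x : ℝ,
      CV⁻¹ * min (∫ y in Set.Iic x, Real.exp (-V y)) (∫ y in Set.Ici x, Real.exp (-V y)) ≤
          Real.exp (-V x) ∧
      Real.exp (-V x) ≤
        CV * min (∫ y in Set.Iic x, Real.exp (-V y)) (∫ y in Set.Ici x, Real.exp (-V y)) :=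
  isoperimetric_profile_two_sided_bound_general V L hVconv hVlip hm_int
end

section
/- Let V : ℝ → ℝ be convex and L-Lipschitz with m = e^{-V} a continuous probability density on ℝ, and let C_V > 0 be a constant such that C_V^{-1} min(F_m(x), 1 − F_m(x)) ≤ m(x) ≤ C_V min(F_m(x), 1 − F_m(x)) for all x, where F_m(x) = ∫_{-∞}^x m. Let 0 < c < C and let f be a continuous positive probability density with c·m ≤ f ≤ C·m, with cumulative distribution function F_f. Let T = F_f^{-1} ∘ F_m be the monotone transport map from m to f. Then for all x ∈ ℝ: c/(C C_V²) ≤ m(x)/f(T(x)) ≤ C C_V²/c. In particular, where T is differentiable, c/(C C_V²) ≤ T'(x) ≤ C C_V²/c. -/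
/-!
Write `S_g(x) = min(F_g(x), 1 - F_g(x))` (`minTailMass g x`) for the mass of the smaller tail
of a density `g`.
The sandwich `c m ≤ f ≤ C m` gives `c S_m ≤ S_f ≤ C S_m`, and `F_f ∘ T = F_m` gives
`S_f(T x) = S_m(x)`. The isoperimetric bounds `m ≍ S_m` (constant `C_V`) then make `m(x)` and
`m(T x)` comparable, and `f(T x) ≍ m(T x)` finishes the ratio bound. Differentiating
`F_f ∘ T = F_m` shows `T' = m / f ∘ T`.
-/

open MeasureTheory Set

noncomputable section

def minTailMass (g : ℝ → ℝ) (x : ℝ) : ℝ :=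
  min (∫ y in Iic x, g y) (1 - ∫ y in Iic x, g y)

theorem one_sub_integral_Iic {g : ℝ → ℝ} (hg : Integrable g) (hg1 : ∫ x, g x = 1) (x : ℝ) :
    1 - ∫ y in Iic x, g y = ∫ y in Ioi x, g y := by
  rw [← hg1, ← intervalIntegral.integral_Iic_add_Ioi hg.integrableOn hg.integrableOn]
  ring

theorem const_mul_setIntegral_le {g h : ℝ → ℝ} (hg : Integrable g) (hh : Integrable h) {a : ℝ}
    (hle : ∀ x, a * g x ≤ h x) {s : Set ℝ} (hs : MeasurableSet s) :
    a * ∫ x in s, g x ≤ ∫ x in s, h x := by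
  rw [← integral_const_mul]
  exact setIntegral_mono_on (hg.const_mul a).integrableOn hh.integrableOn hs fun x _ => hle x

theorem setIntegral_le_const_mul {g h : ℝ → ℝ} (hg : Integrable g) (hh : Integrable h) {a : ℝ}
    (hle : ∀ x, h x ≤ a * g x) {s : Set ℝ} (hs : MeasurableSet s) :
    ∫ x in s, h x ≤ a * ∫ x in s, g x := by
  rw [← integral_const_mul]
  exact setIntegral_mono_on hh.integrableOn (hg.const_mul a).integrableOn hs fun x _ => hle x

section Comparison

variable {g h : ℝ → ℝ} (hg : Integrable g) (hh : Integrable h)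
  (hg1 : ∫ x, g x = 1) (hh1 : ∫ x, h x = 1) {a : ℝ} (ha : 0 ≤ a)
include hg hh hg1 hh1 ha

theorem const_mul_minTailMass_le (hle : ∀ x, a * g x ≤ h x) (x : ℝ) :
    a * minTailMass g x ≤ minTailMass h x := by
  rw [minTailMass, minTailMass, mul_min_of_nonneg _ _ ha, one_sub_integral_Iic hg hg1,
    one_sub_integral_Iic hh hh1]
  exact min_le_min (const_mul_setIntegral_le hg hh hle measurableSet_Iic)
    (const_mul_setIntegral_le hg hh hle measurableSet_Ioi)

theorem minTailMass_le_const_mul (hle : ∀ x, h x ≤ a * g x) (x : ℝ) :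
    minTailMass h x ≤ a * minTailMass g x := by
  rw [minTailMass, minTailMass, mul_min_of_nonneg _ _ ha, one_sub_integral_Iic hg hg1,
    one_sub_integral_Iic hh hh1]
  exact min_le_min (setIntegral_le_const_mul hg hh hle measurableSet_Iic)
    (setIntegral_le_const_mul hg hh hle measurableSet_Ioi)

end Comparison

section Isoperimetric

variable {m : ℝ → ℝ} {K : ℝ} (hK : 0 < K)
  (hiso : ∀ x, K⁻¹ * minTailMass m x ≤ m x ∧ m x ≤ K * minTailMass m x)
include hK hiso

theorem minTailMass_le_mul_self (x : ℝ) : minTailMass m x ≤ K * m x :=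
  (inv_mul_le_iff₀ hK).mp (hiso x).1

theorem le_mul_self_of_minTailMass_le {a x y : ℝ} (ha : 0 ≤ a)
    (hxy : minTailMass m x ≤ a * minTailMass m y) : m x ≤ a * K ^ 2 * m y :=
  calc m x ≤ K * minTailMass m x := (hiso x).2
    _ ≤ K * (a * (K * m y)) := by
      gcongr
      exact hxy.trans (mul_le_mul_of_nonneg_left (minTailMass_le_mul_self hK hiso y) ha)
    _ = a * K ^ 2 * m y := by ring

theorem mul_le_mul_self_of_le_minTailMass {a x y : ℝ} (ha : 0 ≤ a)
    (hxy : a * minTailMass m y ≤ minTailMass m x) : a * m y ≤ K ^ 2 * m x :=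
  calc a * m y ≤ a * (K * minTailMass m y) := by gcongr; exact (hiso y).2
    _ = K * (a * minTailMass m y) := by ring
    _ ≤ K * (K * m x) :=
      mul_le_mul_of_nonneg_left (hxy.trans (minTailMass_le_mul_self hK hiso x)) hK.le
    _ = K ^ 2 * m x := by ring

end Isoperimetric

theorem hasDerivAt_integral_Iic {g : ℝ → ℝ} (hgc : Continuous g) (hgi : Integrable g) (x : ℝ) :
    HasDerivAt (fun z => ∫ y in Iic z, g y) (g x) x := by
  have heq : (fun z => ∫ y in Iic z, g y)
      = fun z => (∫ y in Iic 0, g y) + ∫ t in (0 : ℝ)..z, g t := by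
    funext z
    rw [← intervalIntegral.integral_Iic_sub_Iic hgi.integrableOn hgi.integrableOn]
    ring
  rw [heq]
  exact (intervalIntegral.integral_hasDerivAt_right hgi.intervalIntegrable
    hgc.stronglyMeasurable.stronglyMeasurableAtFilter hgc.continuousAt).const_add _

theorem deriv_eq_div_of_integral_Iic_comp_eq {f m T : ℝ → ℝ} (hfc : Continuous f)
    (hfi : Integrable f) (hmc : Continuous m) (hmi : Integrable m)
    (hT : ∀ x, ∫ y in Iic (T x), f y = ∫ y in Iic x, m y) {x : ℝ}
    (hx : DifferentiableAt ℝ T x) (hfT : f (T x) ≠ 0) :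
    deriv T x = m x / f (T x) := by
  have hcomp := (hasDerivAt_integral_Iic hfc hfi (T x)).comp x hx.hasDerivAt
  rw [show (fun z => ∫ y in Iic z, f y) ∘ T = fun z => ∫ y in Iic z, m y from funext hT] at hcomp
  rw [eq_div_iff hfT, mul_comm]
  exact hcomp.unique (hasDerivAt_integral_Iic hmc hmi x)

end

theorem transport_map_lipschitz_bounds_general
    (V : ℝ → ℝ) (L : NNReal)
    (hVlip : LipschitzWith L V)
    (m : ℝ → ℝ) (hm : m = fun x => Real.exp (-V x))
    (hm_int : Integrable m) (hmass : ∫ x, m x = 1)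
    (CV : ℝ) (hCV : 0 < CV)
    (hiso : ∀ x : ℝ,
      CV⁻¹ * min (∫ y in Set.Iic x, m y) (1 - ∫ y in Set.Iic x, m y) ≤ m x ∧
      m x ≤ CV * min (∫ y in Set.Iic x, m y) (1 - ∫ y in Set.Iic x, m y))
    (c C : ℝ) (hc : 0 < c) (hcC : c < C)
    (f : ℝ → ℝ) (hfcont : Continuous f) (hfpos : ∀ x, 0 < f x)
    (hf_int : Integrable f) (hfprob : ∫ x, f x = 1)
    (hfbounds : ∀ x : ℝ, c * m x ≤ f x ∧ f x ≤ C * m x)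
    (T : ℝ → ℝ)
    (hTtransport : ∀ x : ℝ, (∫ y in Set.Iic (T x), f y) = ∫ y in Set.Iic x, m y) :
    (∀ x : ℝ, c / (C * CV ^ 2) ≤ m x / f (T x) ∧ m x / f (T x) ≤ C * CV ^ 2 / c) ∧
    (∀ x : ℝ, DifferentiableAt ℝ T x →
      c / (C * CV ^ 2) ≤ deriv T x ∧ deriv T x ≤ C * CV ^ 2 / c) := by
  have hC : 0 < C := hc.trans hcC
  have hmcont : Continuous m := hm ▸ (hVlip.continuous.neg).rexp
  have hT : ∀ x, minTailMass f (T x) = minTailMass m x := fun x => by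
    rw [minTailMass, minTailMass, hTtransport]
  have hratio : ∀ x, c / (C * CV ^ 2) ≤ m x / f (T x) ∧ m x / f (T x) ≤ C * CV ^ 2 / c := by
    intro x
    have hup : m x ≤ C * CV ^ 2 * m (T x) := le_mul_self_of_minTailMass_le hCV hiso hC.le <|
      hT x ▸ minTailMass_le_const_mul hm_int hf_int hmass hfprob hC.le
        (fun y => (hfbounds y).2) (T x)
    have hlow : c * m (T x) ≤ CV ^ 2 * m x := mul_le_mul_self_of_le_minTailMass hCV hiso hc.le <|
      hT x ▸ const_mul_minTailMass_le hm_int hf_int hmass hfprob hc.le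
        (fun y => (hfbounds y).1) (T x)
    have hfT := hfpos (T x)
    obtain ⟨hf_lo, hf_hi⟩ := hfbounds (T x)
    constructor
    · rw [div_le_div_iff₀ (by positivity) hfT]
      nlinarith
    · rw [div_le_div_iff₀ hfT hc]
      nlinarith [mul_pos hC (pow_pos hCV 2)]
  refine ⟨hratio, fun x hx => ?_⟩
  rw [deriv_eq_div_of_integral_Iic_comp_eq hfcont hf_int hmcont hm_int hTtransport hx
    (hfpos (T x)).ne']
  exact hratio x

/-- Two-sided Lipschitz bounds for the monotone transport map from
m = e^{-V} to f ∈ P_{c,C}, given a two-sided isoperimetric profile bound for m. -/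
theorem transport_map_lipschitz_bounds
    (V : ℝ → ℝ) (L : NNReal)
    (hVconv : ConvexOn ℝ Set.univ V)
    (hVlip : LipschitzWith L V)
    (m : ℝ → ℝ) (hm : m = fun x => Real.exp (-V x))
    (hm_int : Integrable m) (hmass : ∫ x, m x = 1)
    (CV : ℝ) (hCV : 0 < CV)
    (hiso : ∀ x : ℝ,
      CV⁻¹ * min (∫ y in Set.Iic x, m y) (1 - ∫ y in Set.Iic x, m y) ≤ m x ∧
      m x ≤ CV * min (∫ y in Set.Iic x, m y) (1 - ∫ y in Set.Iic x, m y))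
    (c C : ℝ) (hc : 0 < c) (hcC : c < C)
    (f : ℝ → ℝ) (hfcont : Continuous f) (hfpos : ∀ x, 0 < f x)
    (hf_int : Integrable f) (hfprob : ∫ x, f x = 1)
    (hfbounds : ∀ x : ℝ, c * m x ≤ f x ∧ f x ≤ C * m x)
    (T : ℝ → ℝ) (hTmono : StrictMono T)
    (hTtransport : ∀ x : ℝ, (∫ y in Set.Iic (T x), f y) = ∫ y in Set.Iic x, m y) :
    (∀ x : ℝ, c / (C * CV ^ 2) ≤ m x / f (T x) ∧ m x / f (T x) ≤ C * CV ^ 2 / c) ∧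
    (∀ x : ℝ, DifferentiableAt ℝ T x →
      c / (C * CV ^ 2) ≤ deriv T x ∧ deriv T x ≤ C * CV ^ 2 / c) :=
  transport_map_lipschitz_bounds_general V L hVlip m hm hm_int hmass CV hCV hiso c C hc hcC f hfcont
    hfpos hf_int hfprob hfbounds T hTtransport
end

section
/- Let V : ℝ → ℝ be convex, L-Lipschitz, and continuously differentiable, with m = e^{-V} a continuous probability density on ℝ. Let 0 < c < C and let f be a continuous positive probability density with c·m ≤ f ≤ C·m, with cumulative distribution functions F_m, F_f, and let T = F_f^{-1} ∘ F_m be the monotone transport map from m to f. Then there exists a constant A > 0, depending only on c, C, and V, such that |T(x) − x| ≤ A for all x ∈ ℝ. -/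
/-!
Since `V` is convex and `e^{-V}` is integrable, `V` has secants of positive slope on the right and
of negative slope on the left, so it grows at least linearly at both ends and `m = e^{-V}` has
exponential tails; the Lipschitz bound makes `m` comparable to `m w` on `[w - 1, w]`. Hence once `A`
is large, every interval of length `A` carries more `m`-mass than a prescribed multiple of the
smaller of its two outer tails. If instead `|T x - x| > A`, comparing the distribution functions
of `f` and `m` through `c m ≤ f ≤ C m` bounds the mass between `x` and `x ± A` by `max c⁻¹ C`
times both tails.
-/

open MeasureTheory Real Set Filter Topology

theorem setIntegral_Ioi_le_of_le_exp {g : ℝ → ℝ} {δ M w t : ℝ} (hδ : 0 < δ)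
    (hg : IntegrableOn g (Ioi t)) (hle : ∀ y ∈ Ioi t, g y ≤ M * exp (-(δ * (y - w)))) :
    ∫ y in Ioi t, g y ≤ M / δ * exp (-(δ * (t - w))) := by
  have hexp : ∀ y, M * exp (-(δ * (y - w))) = M * exp (δ * w) * exp (-δ * y) := by
    intro y; rw [mul_assoc, ← exp_add]; ring_nf
  have hδ' : -δ < 0 := neg_neg_of_pos hδ
  calc ∫ y in Ioi t, g y ≤ ∫ y in Ioi t, M * exp (δ * w) * exp (-δ * y) :=
        setIntegral_mono_on hg ((integrableOn_exp_mul_Ioi hδ' t).const_mul _) measurableSet_Ioi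
          fun y hy => hexp y ▸ hle y hy
    _ = M / δ * exp (-(δ * (t - w))) := by
        rw [integral_const_mul, integral_exp_mul_Ioi hδ', div_mul_eq_mul_div, hexp]
        field_simp

theorem setIntegral_Iic_le_of_le_exp {g : ℝ → ℝ} {δ M w t : ℝ} (hδ : 0 < δ)
    (hg : IntegrableOn g (Iic t)) (hle : ∀ y ∈ Iic t, g y ≤ M * exp (-(δ * (w - y)))) :
    ∫ y in Iic t, g y ≤ M / δ * exp (-(δ * (w - t))) := by
  have hexp : ∀ y, M * exp (-(δ * (w - y))) = M * exp (-(δ * w)) * exp (δ * y) := by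
    intro y; rw [mul_assoc, ← exp_add]; ring_nf
  calc ∫ y in Iic t, g y ≤ ∫ y in Iic t, M * exp (-(δ * w)) * exp (δ * y) :=
        setIntegral_mono_on hg ((integrableOn_exp_mul_Iic hδ t).const_mul _) measurableSet_Iic
          fun y hy => hexp y ▸ hle y hy
    _ = M / δ * exp (-(δ * (w - t))) := by
        rw [integral_const_mul, integral_exp_mul_Iic hδ, div_mul_eq_mul_div, hexp]
        field_simp

theorem ConvexOn.slope_le_slope {V : ℝ → ℝ} (hV : ConvexOn ℝ univ V) {a b w y : ℝ}
    (hab : a < b) (hwy : w < y) (haw : a ≤ w) (hby : b ≤ y) : slope V a b ≤ slope V w y :=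
  calc slope V a b ≤ slope V a y :=
        hV.slope_mono (mem_univ a) ⟨mem_univ b, hab.ne'⟩ ⟨mem_univ y, (hab.trans_le hby).ne'⟩ hby
    _ = slope V y a := slope_comm V a y
    _ ≤ slope V y w :=
        hV.slope_mono (mem_univ y) ⟨mem_univ a, (hab.trans_le hby).ne⟩ ⟨mem_univ w, hwy.ne⟩ haw
    _ = slope V w y := slope_comm V y w

theorem ConvexOn.add_slope_mul_le_of_le {V : ℝ → ℝ} (hV : ConvexOn ℝ univ V) {a b w y : ℝ}
    (hab : a < b) (hbw : b ≤ w) (hwy : w ≤ y) : V w + slope V a b * (y - w) ≤ V y := by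
  rcases hwy.eq_or_lt with rfl | hwy
  · simp
  have h := hV.slope_le_slope hab hwy (hab.le.trans hbw) (hbw.trans hwy.le)
  rw [slope_def_field V w y, le_div_iff₀ (sub_pos.2 hwy)] at h
  linarith

theorem ConvexOn.add_slope_mul_le_of_ge {V : ℝ → ℝ} (hV : ConvexOn ℝ univ V) {a b w y : ℝ}
    (hab : a < b) (hwa : w ≤ a) (hyw : y ≤ w) : V w + slope V a b * (y - w) ≤ V y := by
  rcases hyw.eq_or_lt with rfl | hyw
  · simp
  have h := hV.slope_le_slope hyw hab (hyw.le.trans hwa) (hwa.trans hab.le)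
  rw [slope_def_field V y w, div_le_iff₀ (sub_pos.2 hyw)] at h
  linarith

theorem exists_lt_of_integrable_exp_neg {V : ℝ → ℝ} (hint : Integrable fun x => exp (-V x)) :
    ∃ a b, a < b ∧ V a < V b := by
  by_contra! h
  have hsub : Ici (0 : ℝ) ⊆ {x | exp (-V 0) ≤ exp (-V x)} := fun x hx =>
    exp_le_exp.2 (neg_le_neg (antitone_iff_forall_lt.2 h hx))
  have := (measure_mono hsub).trans_lt (hint.measure_ge_lt_top (exp_pos (-V 0)))
  simp at this

theorem ConvexOn.exists_exp_neg_decay {V : ℝ → ℝ} (hV : ConvexOn ℝ univ V)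
    (hint : Integrable fun x => exp (-V x)) :
    ∃ δ > 0, ∃ a b, a ≤ b ∧
      (∀ w ≥ b, ∀ y ≥ w, exp (-V y) ≤ exp (-V w) * exp (-(δ * (y - w)))) ∧
      (∀ w ≤ a, ∀ y ≤ w, exp (-V y) ≤ exp (-V w) * exp (-(δ * (w - y)))) := by
  obtain ⟨a₁, b₁, hab₁, hV₁⟩ := exists_lt_of_integrable_exp_neg hint
  obtain ⟨a₂, b₂, hab₂, hV₂⟩ := exists_lt_of_integrable_exp_neg (V := fun x => V (-x)) hint.comp_neg
  have hab₂' : -b₂ < -a₂ := neg_lt_neg hab₂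
  have hs₁ : 0 < slope V a₁ b₁ := by
    rw [slope_def_field]; exact div_pos (sub_pos.2 hV₁) (sub_pos.2 hab₁)
  have hs₂ : slope V (-b₂) (-a₂) < 0 := by
    rw [slope_def_field]; exact div_neg_of_neg_of_pos (sub_neg.2 hV₂) (sub_pos.2 hab₂')
  obtain ⟨δ, hδ, hδ₁, hδ₂⟩ : ∃ δ > 0, δ ≤ slope V a₁ b₁ ∧ δ ≤ -slope V (-b₂) (-a₂) :=
    ⟨_, lt_min hs₁ (neg_pos.2 hs₂), min_le_left _ _, min_le_right _ _⟩
  refine ⟨δ, hδ, min (-b₂) b₁, b₁, min_le_right _ _, ?_, ?_⟩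
  · intro w hw y hy
    have hgrowth := hV.add_slope_mul_le_of_le hab₁ hw hy
    have := mul_le_mul_of_nonneg_right hδ₁ (sub_nonneg.2 hy)
    rw [← exp_add]
    exact exp_le_exp.2 (by linarith)
  · intro w hw y hy
    have hgrowth := hV.add_slope_mul_le_of_ge hab₂' (hw.trans (min_le_left _ _)) hy
    have := mul_le_mul_of_nonneg_right hδ₂ (sub_nonneg.2 hy)
    rw [← exp_add]
    exact exp_le_exp.2 (by linarith)

theorem LipschitzWith.exp_neg_mul_le {V : ℝ → ℝ} {L : NNReal} (hV : LipschitzWith L V)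
    {w y : ℝ} (hwy : |y - w| ≤ 1) : exp (-L) * exp (-V w) ≤ exp (-V y) := by
  have h := hV.dist_le_mul y w
  rw [Real.dist_eq, Real.dist_eq] at h
  have := (abs_le.1 (h.trans (mul_le_of_le_one_right L.coe_nonneg hwy))).2
  rw [← exp_add]
  exact exp_le_exp.2 (by linarith)

section ExponentialTails

variable {m : ℝ → ℝ} {ε δ a b : ℝ}

theorem mul_le_intervalIntegral_of_local_lower_bound (hm_int : Integrable m)
    (hm_nonneg : ∀ x, 0 ≤ m x) (hloc : ∀ w y, |y - w| ≤ 1 → ε * m w ≤ m y) {z z' w : ℝ}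
    (hzw : z ≤ w - 1) (hwz : w ≤ z') : ε * m w ≤ ∫ x in z..z', m x :=
  calc ε * m w = ∫ _ in (w - 1)..w, ε * m w := by simp
    _ ≤ ∫ x in (w - 1)..w, m x :=
        intervalIntegral.integral_mono_on (by linarith) intervalIntegrable_const
          hm_int.intervalIntegrable fun y hy =>
            hloc w y (abs_le.2 ⟨by linarith [hy.1], by linarith [hy.2]⟩)
    _ ≤ ∫ x in z..z', m x :=
        intervalIntegral.integral_mono_interval hzw (by linarith) hwz
          (ae_of_all _ hm_nonneg) hm_int.intervalIntegrable

theorem exists_min_tails_le (hm_int : Integrable m) (hm_nonneg : ∀ x, 0 ≤ m x) (hδ : 0 < δ)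
    (hab : a ≤ b)
    (hright : ∀ w ≥ b, ∀ y ≥ w, m y ≤ m w * exp (-(δ * (y - w))))
    (hleft : ∀ w ≤ a, ∀ y ≤ w, m y ≤ m w * exp (-(δ * (w - y))))
    {A : ℝ} (hA : 2 * (b - a + 1) ≤ A) (z : ℝ) :
    ∃ w, z ≤ w - 1 ∧ w ≤ z + A ∧ min (∫ x in Iic z, m x) (∫ x in Ioi (z + A), m x) ≤
      m w / δ * exp (-(δ * (A / 2 - (b - a)))) := by
  by_cases hz : b ≤ z + A / 2
  · refine ⟨z + A / 2, by linarith, by linarith, (min_le_right _ _).trans ?_⟩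
    calc ∫ x in Ioi (z + A), m x ≤ m (z + A / 2) / δ * exp (-(δ * (z + A - (z + A / 2)))) :=
          setIntegral_Ioi_le_of_le_exp hδ hm_int.integrableOn
            fun y hy => hright _ hz y (by linarith [hy.out])
      _ ≤ m (z + A / 2) / δ * exp (-(δ * (A / 2 - (b - a)))) := by
          have := hm_nonneg (z + A / 2)
          gcongr _ * exp (-(δ * ?_))
          linarith
  · refine ⟨z + A / 2 - (b - a), by linarith, by linarith, (min_le_left _ _).trans ?_⟩
    calc ∫ x in Iic z, m x
        ≤ m (z + A / 2 - (b - a)) / δ * exp (-(δ * (z + A / 2 - (b - a) - z))) :=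
          setIntegral_Iic_le_of_le_exp hδ hm_int.integrableOn
            fun y hy => hleft _ (by linarith) y (by linarith [hy.out])
      _ = m (z + A / 2 - (b - a)) / δ * exp (-(δ * (A / 2 - (b - a)))) := by ring_nf

theorem exists_mul_min_tails_lt_intervalIntegral (hm_int : Integrable m)
    (hm_pos : ∀ x, 0 < m x) (hε : 0 < ε) (hδ : 0 < δ) (hab : a ≤ b)
    (hloc : ∀ w y, |y - w| ≤ 1 → ε * m w ≤ m y)
    (hright : ∀ w ≥ b, ∀ y ≥ w, m y ≤ m w * exp (-(δ * (y - w))))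
    (hleft : ∀ w ≤ a, ∀ y ≤ w, m y ≤ m w * exp (-(δ * (w - y)))) {K : ℝ} (hK : 0 ≤ K) :
    ∃ A > 0, ∀ z,
      K * min (∫ x in Iic z, m x) (∫ x in Ioi (z + A), m x) < ∫ x in z..z + A, m x := by
  have hdecay : Tendsto (fun A => K / δ * exp (-(δ * (A / 2 - (b - a))))) atTop (𝓝 0) := by
    have : Tendsto (fun A : ℝ => -(δ * (A / 2 - (b - a)))) atTop atBot :=
      tendsto_neg_atTop_atBot.comp <| Tendsto.const_mul_atTop hδ <|
        tendsto_atTop_add_const_right _ _ (tendsto_id.atTop_div_const two_pos)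
    simpa using (tendsto_exp_atBot.comp this).const_mul (K / δ)
  obtain ⟨A, hA, hAε⟩ :=
    ((eventually_ge_atTop (2 * (b - a + 1))).and (hdecay.eventually (gt_mem_nhds hε))).exists
  refine ⟨A, by linarith, fun z => ?_⟩
  obtain ⟨w, hzw, hwz, hmin⟩ :=
    exists_min_tails_le hm_int (fun x => (hm_pos x).le) hδ hab hright hleft hA z
  calc K * min (∫ x in Iic z, m x) (∫ x in Ioi (z + A), m x)
      ≤ K * (m w / δ * exp (-(δ * (A / 2 - (b - a))))) := mul_le_mul_of_nonneg_left hmin hK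
    _ = K / δ * exp (-(δ * (A / 2 - (b - a)))) * m w := by ring
    _ < ε * m w := mul_lt_mul_of_pos_right hAε (hm_pos w)
    _ ≤ ∫ x in z..z + A, m x :=
        mul_le_intervalIntegral_of_local_lower_bound hm_int (fun x => (hm_pos x).le) hloc hzw hwz

end ExponentialTails

theorem le_max_inv_mul_min {c C I F G : ℝ} (hc : 0 < c) (hF : 0 ≤ F) (hG : 0 ≤ G)
    (hIF : c * I ≤ F) (hIG : I ≤ C * G) : I ≤ max c⁻¹ C * min F G := by
  rw [mul_min_of_nonneg _ _ (le_max_of_le_left (inv_pos.2 hc).le)]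
  refine le_min ?_ (hIG.trans (mul_le_mul_of_nonneg_right (le_max_right _ _) hG))
  calc I ≤ c⁻¹ * F := (le_inv_mul_iff₀ hc).2 hIF
    _ ≤ max c⁻¹ C * F := mul_le_mul_of_nonneg_right (le_max_left _ _) hF

section Transport

variable {m f : ℝ → ℝ} {c C : ℝ}

theorem mul_setIntegral_le_and_setIntegral_le_mul (hm_int : Integrable m) (hf_int : Integrable f)
    (hbounds : ∀ x, c * m x ≤ f x ∧ f x ≤ C * m x) (s : Set ℝ) :
    c * ∫ x in s, m x ≤ ∫ x in s, f x ∧ ∫ x in s, f x ≤ C * ∫ x in s, m x := by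
  simp only [← integral_const_mul]
  exact ⟨setIntegral_mono (hm_int.const_mul c).integrableOn hf_int.integrableOn
      fun x => (hbounds x).1,
    setIntegral_mono hf_int.integrableOn (hm_int.const_mul C).integrableOn fun x => (hbounds x).2⟩

theorem intervalIntegral_le_mul_min_tails_of_transport_ge (hm_int : Integrable m)
    (hf_int : Integrable f) (hmass : ∫ x, f x = ∫ x, m x) (hm_nonneg : ∀ x, 0 ≤ m x)
    (hc : 0 < c) (hbounds : ∀ x, c * m x ≤ f x ∧ f x ≤ C * m x) {a b t : ℝ} (hab : a ≤ b)
    (hbt : b ≤ t) (ht : ∫ x in Iic t, f x = ∫ x in Iic a, m x) :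
    ∫ x in a..b, m x ≤ max c⁻¹ C * min (∫ x in Iic a, m x) (∫ x in Ioi b, m x) := by
  have hf_nonneg x : 0 ≤ f x := (mul_nonneg hc.le (hm_nonneg x)).trans (hbounds x).1
  have hF :=
    intervalIntegral.integral_Iic_sub_Iic hm_int.integrableOn hm_int.integrableOn (a := a) (b := b)
  have hG := intervalIntegral.integral_Ioi_sub_Ioi hm_int.integrableOn hab
  have hm_split :=
    intervalIntegral.integral_Iic_add_Ioi (b := a) hm_int.integrableOn hm_int.integrableOn
  have hf_split :=
    intervalIntegral.integral_Iic_add_Ioi (b := b) hf_int.integrableOn hf_int.integrableOn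
  have hf_mono : ∫ x in Iic b, f x ≤ ∫ x in Iic t, f x :=
    setIntegral_mono_set hf_int.integrableOn (ae_of_all _ hf_nonneg)
      (Iic_subset_Iic.2 hbt).eventuallyLE
  have hlower := (mul_setIntegral_le_and_setIntegral_le_mul hm_int hf_int hbounds (Iic b)).1
  have hupper := (mul_setIntegral_le_and_setIntegral_le_mul hm_int hf_int hbounds (Ioi b)).2
  have hFa : 0 ≤ ∫ x in Iic a, m x := setIntegral_nonneg measurableSet_Iic fun x _ => hm_nonneg x
  have hGb : 0 ≤ ∫ x in Ioi b, m x := setIntegral_nonneg measurableSet_Ioi fun x _ => hm_nonneg x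
  refine le_max_inv_mul_min hc hFa hGb ?_ (by linarith)
  have hcI : c * (∫ x in Iic b, m x) - c * (∫ x in Iic a, m x) = c * ∫ x in a..b, m x := by
    rw [← hF, mul_sub]
  linarith [mul_nonneg hc.le hFa]

theorem intervalIntegral_le_mul_min_tails_of_transport_le (hm_int : Integrable m)
    (hf_int : Integrable f) (hmass : ∫ x, f x = ∫ x, m x) (hm_nonneg : ∀ x, 0 ≤ m x)
    (hc : 0 < c) (hbounds : ∀ x, c * m x ≤ f x ∧ f x ≤ C * m x) {a b t : ℝ} (hab : a ≤ b)
    (hta : t ≤ a) (ht : ∫ x in Iic t, f x = ∫ x in Iic b, m x) :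
    ∫ x in a..b, m x ≤ max c⁻¹ C * min (∫ x in Iic a, m x) (∫ x in Ioi b, m x) := by
  have hf_nonneg x : 0 ≤ f x := (mul_nonneg hc.le (hm_nonneg x)).trans (hbounds x).1
  have hF :=
    intervalIntegral.integral_Iic_sub_Iic hm_int.integrableOn hm_int.integrableOn (a := a) (b := b)
  have hG := intervalIntegral.integral_Ioi_sub_Ioi hm_int.integrableOn hab
  have hm_split :=
    intervalIntegral.integral_Iic_add_Ioi (b := b) hm_int.integrableOn hm_int.integrableOn
  have hf_split :=
    intervalIntegral.integral_Iic_add_Ioi (b := a) hf_int.integrableOn hf_int.integrableOn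
  have hf_mono : ∫ x in Iic t, f x ≤ ∫ x in Iic a, f x :=
    setIntegral_mono_set hf_int.integrableOn (ae_of_all _ hf_nonneg)
      (Iic_subset_Iic.2 hta).eventuallyLE
  have hupper := (mul_setIntegral_le_and_setIntegral_le_mul hm_int hf_int hbounds (Iic a)).2
  have hlower := (mul_setIntegral_le_and_setIntegral_le_mul hm_int hf_int hbounds (Ioi a)).1
  have hFa : 0 ≤ ∫ x in Iic a, m x := setIntegral_nonneg measurableSet_Iic fun x _ => hm_nonneg x
  have hGb : 0 ≤ ∫ x in Ioi b, m x := setIntegral_nonneg measurableSet_Ioi fun x _ => hm_nonneg x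
  rw [min_comm]
  refine le_max_inv_mul_min hc hGb hFa ?_ (by linarith)
  have hcI : c * (∫ x in Ioi a, m x) - c * (∫ x in Ioi b, m x) = c * ∫ x in a..b, m x := by
    rw [← hG, mul_sub]
  linarith [mul_nonneg hc.le hGb]

end Transport

theorem transport_map_bounded_displacement_general
    (V : ℝ → ℝ) (L : NNReal)
    (hVconv : ConvexOn ℝ Set.univ V)
    (hVlip : LipschitzWith L V)
    (m : ℝ → ℝ) (hm : m = fun x => Real.exp (-V x))
    (hm_int : Integrable m) (hmass : ∫ x, m x = 1)
    (c C : ℝ) (hc : 0 < c)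
    (f : ℝ → ℝ)
    (hf_int : Integrable f) (hfprob : ∫ x, f x = 1)
    (hfbounds : ∀ x : ℝ, c * m x ≤ f x ∧ f x ≤ C * m x)
    (T : ℝ → ℝ)
    (hTtransport : ∀ x : ℝ, (∫ y in Set.Iic (T x), f y) = ∫ y in Set.Iic x, m y) :
    ∃ A > (0:ℝ), ∀ x : ℝ, |T x - x| ≤ A := by
  subst hm
  have hm_nonneg x : 0 ≤ exp (-V x) := (exp_pos _).le
  have hmass_eq : ∫ x, f x = ∫ x, exp (-V x) := hfprob.trans hmass.symm
  obtain ⟨δ, hδ, a, b, hab, hright, hleft⟩ := hVconv.exists_exp_neg_decay hm_int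
  obtain ⟨A, hA, hkey⟩ := exists_mul_min_tails_lt_intervalIntegral hm_int (fun x => exp_pos _)
    (exp_pos (-L)) hδ hab (fun _ _ => hVlip.exp_neg_mul_le) hright hleft
    (le_max_of_le_left (inv_pos.2 hc).le : 0 ≤ max c⁻¹ C)
  refine ⟨A, hA, fun x => abs_sub_le_iff.2 ⟨?_, ?_⟩⟩
  · by_contra! h
    exact (hkey x).not_ge <| intervalIntegral_le_mul_min_tails_of_transport_ge hm_int hf_int
      hmass_eq hm_nonneg hc hfbounds (by linarith) (by linarith) (hTtransport x)
  · by_contra! h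
    have hkey' := hkey (x - A)
    rw [sub_add_cancel] at hkey'
    exact hkey'.not_ge <| intervalIntegral_le_mul_min_tails_of_transport_le hm_int hf_int hmass_eq
      hm_nonneg hc hfbounds (by linarith) (by linarith) (hTtransport x)

/-- Uniformly bounded displacement of the monotone transport map from
m = e^{-V} to f ∈ P_{c,C}, for convex, Lipschitz, C¹ potentials V. -/
theorem transport_map_bounded_displacement
    (V : ℝ → ℝ) (L : NNReal)
    (hVconv : ConvexOn ℝ Set.univ V)
    (hVlip : LipschitzWith L V)
    (hVC1 : ContDiff ℝ 1 V)
    (m : ℝ → ℝ) (hm : m = fun x => Real.exp (-V x))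
    (hm_int : Integrable m) (hmass : ∫ x, m x = 1)
    (c C : ℝ) (hc : 0 < c) (hcC : c < C)
    (f : ℝ → ℝ) (hfcont : Continuous f) (hfpos : ∀ x, 0 < f x)
    (hf_int : Integrable f) (hfprob : ∫ x, f x = 1)
    (hfbounds : ∀ x : ℝ, c * m x ≤ f x ∧ f x ≤ C * m x)
    (T : ℝ → ℝ) (hTmono : StrictMono T)
    (hTtransport : ∀ x : ℝ, (∫ y in Set.Iic (T x), f y) = ∫ y in Set.Iic x, m y) :
    ∃ A > (0:ℝ), ∀ x : ℝ, |T x - x| ≤ A :=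
  transport_map_bounded_displacement_general V L hVconv hVlip m hm hm_int hmass c C hc f hf_int
    hfprob hfbounds T hTtransport
end

section
/- Let V : ℝ → ℝ be convex, L-Lipschitz, and continuously differentiable, with m = e^{-V} a continuous probability density on ℝ. Let 0 < c < C and let f be a continuous positive probability density with c·m ≤ f ≤ C·m, and let T = F_f^{-1} ∘ F_m be the monotone transport map from m to f; assume T is continuously differentiable with T'(x) = m(x)/f(T(x)). Then there exist constants 0 < c' < C', depending only on c, C, and V, such that for every α ∈ [0,1] and every x ∈ ℝ: c' · e^{-V((1−α)x + αT(x))} ≤ e^{-V(x)} / ((1−α) + α T'(x)) ≤ C' · e^{-V((1−α)x + αT(x))}. -/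
/-!
Write `m = exp (-V)`. If the convex potential `V` rises by `Δ > 0` over `[p, q]`, its slope there
is `τ = Δ / (q - p)`, so beyond `q` the density `m` decays at least like `m q * exp (-τ (y - q))`
and the tail past `q` has mass at most `m q / τ`, while `[p, q]` has mass at least `(q - p) * m q`.
Hence `Δ * (tail mass) ≤ (mass of [p, q])`, and symmetrically on the left.

The transport identity together with `c * m ≤ f ≤ C * m` bounds the `m`-mass between `x` and
`T x` by `C - 1` (resp. `(1 - c) / c`) times the mass of the adjacent tail. With the previous
estimate this gives `V (T x) ≤ V x + B` and `V ≥ V x - A` on the segment from `x` to `T x`,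
where `A = (1 - c) / c` and `B = C - 1`; by convexity also `V ≤ V x + B` on that segment. Then
`T' x = m x / f (T x)` lies in `[exp (-A) / C, exp B / c]`, an interval containing `1`, hence so
does the interpolated Jacobian `(1 - α) + α T' x`, and the two-sided density bound follows.
-/

open MeasureTheory Real Set Filter Topology

theorem mul_integral_Ioi_exp_neg_le {V : ℝ → ℝ} {q τ : ℝ} (hτ : 0 < τ)
    (hint : IntegrableOn (fun y => exp (-V y)) (Ioi q))
    (hV : ∀ y ∈ Ioi q, V q + τ * (y - q) ≤ V y) :
    τ * ∫ y in Ioi q, exp (-V y) ≤ exp (-V q) := by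
  set K := exp (τ * q - V q)
  have hexp : ∫ y in Ioi q, exp (-(τ * y)) = τ⁻¹ * exp (-(τ * q)) := by
    rw [integral_comp_mul_left_Ioi (fun u => exp (-u)) q hτ, integral_exp_neg_Ioi, smul_eq_mul]
  have hle : ∫ y in Ioi q, exp (-V y) ≤ ∫ y in Ioi q, K * exp (-(τ * y)) := by
    refine setIntegral_mono_on hint ?_ measurableSet_Ioi fun y hy => ?_
    · exact (by simpa only [neg_mul] using exp_neg_integrableOn_Ioi q hτ :
        IntegrableOn (fun y => exp (-(τ * y))) (Ioi q)).const_mul K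
    · rw [← exp_add]
      exact exp_le_exp.2 (by linarith [hV y hy])
  calc τ * ∫ y in Ioi q, exp (-V y) ≤ τ * (K * (τ⁻¹ * exp (-(τ * q)))) := by
        rw [← hexp, ← integral_const_mul K]; exact mul_le_mul_of_nonneg_left hle hτ.le
    _ = exp (-V q) := by
        rw [mul_left_comm, mul_inv_cancel_left₀ hτ.ne', ← exp_add]; ring_nf

theorem ConvexOn.sub_le_of_intervalIntegral_le_mul_integral_Ioi {V : ℝ → ℝ}
    (hV : ConvexOn ℝ univ V) (hint : Integrable fun y => exp (-V y)) {p q K : ℝ} (hpq : p ≤ q)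
    (hK : 0 ≤ K) (h : ∫ y in p..q, exp (-V y) ≤ K * ∫ y in Ioi q, exp (-V y)) :
    V q - V p ≤ K := by
  by_contra! hKV
  have hpq : p < q := hpq.lt_of_ne (by rintro rfl; linarith)
  set τ := (V q - V p) / (q - p)
  have hτ : 0 < τ := div_pos (by linarith) (sub_pos.2 hpq)
  have hslope : ∀ y ∈ Ioi q, V q + τ * (y - q) ≤ V y := fun y hy => by
    have := hV.slope_mono_adjacent (mem_univ p) (mem_univ y) hpq hy
    rw [le_div_iff₀ (sub_pos.2 hy)] at this
    linarith
  have htail := mul_integral_Ioi_exp_neg_le hτ hint.integrableOn hslope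
  have hmid : (q - p) * exp (-V q) ≤ ∫ y in p..q, exp (-V y) := by
    rw [← smul_eq_mul, ← intervalIntegral.integral_const]
    refine intervalIntegral.integral_mono_on hpq.le intervalIntegrable_const
      hint.intervalIntegrable fun y hy => exp_le_exp.2 (neg_le_neg ?_)
    have := hV.le_on_segment (mem_univ p) (mem_univ q) (by rwa [segment_eq_Icc hpq.le])
    exact this.trans (max_le (by linarith) le_rfl)
  have hτmul : τ * (q - p) = V q - V p := div_mul_cancel₀ _ (sub_pos.2 hpq).ne'
  have : (V q - V p) * exp (-V q) ≤ K * exp (-V q) := by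
    calc (V q - V p) * exp (-V q) = τ * ((q - p) * exp (-V q)) := by rw [← hτmul, mul_assoc]
      _ ≤ τ * (K * ∫ y in Ioi q, exp (-V y)) := mul_le_mul_of_nonneg_left (hmid.trans h) hτ.le
      _ = K * (τ * ∫ y in Ioi q, exp (-V y)) := by ring
      _ ≤ K * exp (-V q) := by gcongr
  linarith [le_of_mul_le_mul_right this (exp_pos _)]

theorem ConvexOn.sub_le_of_intervalIntegral_le_mul_integral_Iic {V : ℝ → ℝ}
    (hV : ConvexOn ℝ univ V) (hint : Integrable fun y => exp (-V y)) {p q K : ℝ} (hpq : p ≤ q)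
    (hK : 0 ≤ K) (h : ∫ y in p..q, exp (-V y) ≤ K * ∫ y in Iic p, exp (-V y)) :
    V p - V q ≤ K := by
  have hW : ConvexOn ℝ univ fun y => V (-y) := by
    refine ⟨convex_univ, fun x _ y _ a b ha hb hab => ?_⟩
    simpa only [smul_eq_mul, neg_add, mul_neg] using
      hV.2 (mem_univ (-x)) (mem_univ (-y)) ha hb hab
  have := hW.sub_le_of_intervalIntegral_le_mul_integral_Ioi hint.comp_neg (neg_le_neg hpq) hK
    (by rwa [intervalIntegral.integral_comp_neg (fun y => exp (-V y)),
      integral_comp_neg_Ioi (-p) (fun y => exp (-V y)), neg_neg, neg_neg])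
  simpa using this

theorem integral_Ioi_eq_of_integral_Iic_eq {g h : ℝ → ℝ} (hg : Integrable g) (hh : Integrable h)
    (htot : ∫ y, g y = ∫ y, h y) {a b : ℝ} (hab : ∫ y in Iic a, g y = ∫ y in Iic b, h y) :
    ∫ y in Ioi a, g y = ∫ y in Ioi b, h y := by
  have hg' := intervalIntegral.integral_Iic_add_Ioi (b := a) hg.integrableOn hg.integrableOn
  have hh' := intervalIntegral.integral_Iic_add_Ioi (b := b) hh.integrableOn hh.integrableOn
  linarith

section Transport

variable {V f : ℝ → ℝ} {x t : ℝ}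

theorem ConvexOn.le_add_sub_one_of_transport (hV : ConvexOn ℝ univ V)
    (hm : Integrable fun y => exp (-V y)) (hf : Integrable f)
    (hmass : ∫ y, f y = ∫ y, exp (-V y)) {C : ℝ} (hC : 1 ≤ C)
    (hfC : ∀ y, f y ≤ C * exp (-V y))
    (ht : ∫ y in Iic t, f y = ∫ y in Iic x, exp (-V y)) :
    V t ≤ V x + (C - 1) := by
  have hfC' (s : Set ℝ) : ∫ y in s, f y ≤ C * ∫ y in s, exp (-V y) := by
    rw [← integral_const_mul]
    exact setIntegral_mono hf.integrableOn (hm.const_mul C).integrableOn hfC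
  rcases le_total x t with hxt | htx
  · have hsplit := intervalIntegral.integral_Ioi_sub_Ioi hm.integrableOn hxt
    have hcompl := integral_Ioi_eq_of_integral_Iic_eq hf hm hmass ht
    have := hV.sub_le_of_intervalIntegral_le_mul_integral_Ioi hm hxt (sub_nonneg.2 hC)
      (by linarith [hfC' (Ioi t)])
    linarith
  · have hsplit := intervalIntegral.integral_Iic_sub_Iic hm.integrableOn hm.integrableOn
      (a := t) (b := x)
    have := hV.sub_le_of_intervalIntegral_le_mul_integral_Iic hm htx (sub_nonneg.2 hC)
      (by linarith [hfC' (Iic t)])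
    linarith

theorem ConvexOn.sub_le_on_segment_of_transport (hV : ConvexOn ℝ univ V)
    (hm : Integrable fun y => exp (-V y)) (hf : Integrable f)
    (hmass : ∫ y, f y = ∫ y, exp (-V y)) {c : ℝ} (hc : 0 < c) (hc1 : c ≤ 1)
    (hfc : ∀ y, c * exp (-V y) ≤ f y)
    (ht : ∫ y in Iic t, f y = ∫ y in Iic x, exp (-V y)) {z : ℝ} (hz : z ∈ segment ℝ x t) :
    V x - (1 - c) / c ≤ V z := by
  have hfc' (s : Set ℝ) : c * ∫ y in s, exp (-V y) ≤ ∫ y in s, f y := by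
    rw [← integral_const_mul]
    exact setIntegral_mono (hm.const_mul c).integrableOn hf.integrableOn hfc
  have hK : 0 ≤ (1 - c) / c := div_nonneg (sub_nonneg.2 hc1) hc.le
  have hmono {a b d e : ℝ} (hda : d ≤ a) (hab : a ≤ b) (hbe : b ≤ e) :
      c * ∫ y in a..b, exp (-V y) ≤ c * ∫ y in d..e, exp (-V y) :=
    mul_le_mul_of_nonneg_left (intervalIntegral.integral_mono_interval hda hab hbe
      (ae_of_all _ fun y => (exp_pos _).le) hm.intervalIntegrable) hc.le
  rcases le_total x t with hxt | htx
  · rw [segment_eq_Icc hxt] at hz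
    have hsplit := intervalIntegral.integral_Iic_sub_Iic hm.integrableOn hm.integrableOn
      (a := x) (b := t)
    have : ∫ y in x..z, exp (-V y) ≤ (1 - c) / c * ∫ y in Iic x, exp (-V y) := by
      rw [div_mul_eq_mul_div, le_div_iff₀ hc]
      have := hsplit ▸ hmono le_rfl hz.1 hz.2
      linarith [hfc' (Iic t)]
    linarith [hV.sub_le_of_intervalIntegral_le_mul_integral_Iic hm hz.1 hK this]
  · rw [segment_symm, segment_eq_Icc htx] at hz
    have hsplit := intervalIntegral.integral_Ioi_sub_Ioi hm.integrableOn htx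
    have hcompl := integral_Ioi_eq_of_integral_Iic_eq hf hm hmass ht
    have : ∫ y in z..x, exp (-V y) ≤ (1 - c) / c * ∫ y in Ioi x, exp (-V y) := by
      rw [div_mul_eq_mul_div, le_div_iff₀ hc]
      have := hsplit ▸ hmono hz.1 hz.2 le_rfl
      linarith [hfc' (Ioi t)]
    linarith [hV.sub_le_of_intervalIntegral_le_mul_integral_Ioi hm hz.2 hK this]

end Transport

theorem exp_neg_mem_Icc_of_mem_Icc {u v A B : ℝ} (hv : v ∈ Icc (u - A) (u + B)) :
    exp (-u) ∈ Icc (exp (-A) * exp (-v)) (exp B * exp (-v)) := by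
  constructor <;> rw [← exp_add] <;> exact exp_le_exp.2 (by linarith [hv.1, hv.2])

theorem exp_neg_div_mem_Icc {u w r A B c C : ℝ} (hc : 0 < c)
    (hr : r ∈ Icc (c * exp (-w)) (C * exp (-w))) (hw : w ∈ Icc (u - A) (u + B)) :
    exp (-u) / r ∈ Icc (exp (-A) / C) (exp B / c) := by
  have hr0 : 0 < r := lt_of_lt_of_le (by positivity) hr.1
  have hC : 0 < C := pos_of_mul_pos_left (hr0.trans_le hr.2) (exp_pos _).le
  obtain ⟨hlow, hup⟩ := exp_neg_mem_Icc_of_mem_Icc hw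
  constructor
  · rw [div_le_div_iff₀ hC hr0]
    calc exp (-A) * r ≤ exp (-A) * (C * exp (-w)) := by gcongr; exact hr.2
      _ = C * (exp (-A) * exp (-w)) := by ring
      _ ≤ exp (-u) * C := by rw [mul_comm _ C]; gcongr
  · rw [div_le_div_iff₀ hr0 hc]
    calc exp (-u) * c ≤ exp B * exp (-w) * c := by gcongr
      _ = exp B * (c * exp (-w)) := by ring
      _ ≤ exp B * r := by gcongr; exact hr.1

theorem one_sub_add_mul_mem_Icc {a b s α : ℝ} (ha : a ≤ 1) (hb : 1 ≤ b) (hs : s ∈ Icc a b)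
    (hα : α ∈ Icc (0 : ℝ) 1) : (1 - α) + α * s ∈ Icc a b := by
  obtain ⟨hα0, hα1⟩ := hα
  constructor <;> nlinarith [hs.1, hs.2]

theorem exp_neg_div_bounds {u v D A B c C : ℝ} (hc : 0 < c) (hC : 0 < C)
    (hD : D ∈ Icc (exp (-A) / C) (exp B / c)) (hv : v ∈ Icc (u - A) (u + B)) :
    c * exp (-(A + B)) * exp (-v) ≤ exp (-u) / D ∧ exp (-u) / D ≤ C * exp (A + B) * exp (-v) := by
  have hD0 : 0 < D := lt_of_lt_of_le (by positivity) hD.1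
  obtain ⟨hlow, hup⟩ := exp_neg_mem_Icc_of_mem_Icc hv
  constructor
  · rw [le_div_iff₀ hD0]
    calc c * exp (-(A + B)) * exp (-v) * D ≤ c * exp (-(A + B)) * exp (-v) * (exp B / c) := by
          gcongr; exact hD.2
      _ = exp (-(A + B)) * exp B * exp (-v) * (c / c) := by ring
      _ = exp (-A) * exp (-v) := by rw [div_self hc.ne', mul_one, ← exp_add, neg_add,
          neg_add_cancel_right]
      _ ≤ exp (-u) := hlow
  · rw [div_le_iff₀ hD0]
    calc exp (-u) ≤ exp B * exp (-v) := hup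
      _ = exp (A + B) * exp (-A) * exp (-v) * (C / C) := by
          rw [div_self hC.ne', mul_one, ← exp_add (A + B), add_neg_cancel_comm]
      _ = C * exp (A + B) * exp (-v) * (exp (-A) / C) := by ring
      _ ≤ C * exp (A + B) * exp (-v) * D := by gcongr; exact hD.1

theorem geodesic_stays_in_sandwich_class_general
    (V : ℝ → ℝ)
    (hVconv : ConvexOn ℝ Set.univ V)
    (m : ℝ → ℝ) (hm : m = fun x => Real.exp (-V x))
    (hm_int : Integrable m) (hmass : ∫ x, m x = 1)
    (c C : ℝ) (hc : 0 < c) (hcC : c < C)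
    (f : ℝ → ℝ)
    (hf_int : Integrable f) (hfprob : ∫ x, f x = 1)
    (hfbounds : ∀ x : ℝ, c * m x ≤ f x ∧ f x ≤ C * m x)
    (T : ℝ → ℝ)
    (hTtransport : ∀ x : ℝ, (∫ y in Set.Iic (T x), f y) = ∫ y in Set.Iic x, m y)
    (hMA : ∀ x : ℝ, deriv T x = m x / f (T x)) :
    ∃ c' C' : ℝ, 0 < c' ∧ c' < C' ∧
      ∀ α ∈ Set.Icc (0:ℝ) 1, ∀ x : ℝ,
        c' * Real.exp (-V ((1 - α) * x + α * T x)) ≤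
            Real.exp (-V x) / ((1 - α) + α * deriv T x) ∧
        Real.exp (-V x) / ((1 - α) + α * deriv T x) ≤
            C' * Real.exp (-V ((1 - α) * x + α * T x)) := by
  subst hm
  have hsame_mass : ∫ y, f y = ∫ y, exp (-V y) := hfprob.trans hmass.symm
  have hc1 : c ≤ 1 := by
    simpa [integral_const_mul, hmass, hfprob] using
      integral_mono (hm_int.const_mul c) hf_int fun y => (hfbounds y).1
  have hC1 : 1 ≤ C := by
    simpa [integral_const_mul, hmass, hfprob] using
      integral_mono hf_int (hm_int.const_mul C) fun y => (hfbounds y).2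
  set A := (1 - c) / c
  set B := C - 1
  have hA : 0 ≤ A := div_nonneg (sub_nonneg.2 hc1) hc.le
  have hB : 0 ≤ B := sub_nonneg.2 hC1
  refine ⟨c * exp (-(A + B)), C * exp (A + B), by positivity, ?_, fun α hα x => ?_⟩
  · calc c * exp (-(A + B)) < C * exp (-(A + B)) := by gcongr
      _ ≤ C * exp (A + B) := by gcongr; linarith
  have hseg : (1 - α) * x + α * T x ∈ segment ℝ x (T x) :=
    ⟨1 - α, α, sub_nonneg.2 hα.2, hα.1, sub_add_cancel 1 α, by simp only [smul_eq_mul]⟩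
  have hup := hVconv.le_add_sub_one_of_transport hm_int hf_int hsame_mass hC1
    (fun y => (hfbounds y).2) (hTtransport x)
  have hlow {z : ℝ} (hz : z ∈ segment ℝ x (T x)) : V x - A ≤ V z :=
    hVconv.sub_le_on_segment_of_transport hm_int hf_int hsame_mass hc hc1
      (fun y => (hfbounds y).1) (hTtransport x) hz
  have hVT : V (T x) ∈ Icc (V x - A) (V x + B) := ⟨hlow (right_mem_segment ℝ x (T x)), hup⟩
  have hVα : V ((1 - α) * x + α * T x) ∈ Icc (V x - A) (V x + B) :=
    ⟨hlow hseg, (hVconv.le_on_segment (mem_univ _) (mem_univ _) hseg).trans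
      (max_le (by linarith) hup)⟩
  have hT' : deriv T x ∈ Icc (exp (-A) / C) (exp B / c) :=
    hMA x ▸ exp_neg_div_mem_Icc hc (hfbounds (T x)) hVT
  have hJ := one_sub_add_mul_mem_Icc
    (div_le_one_of_le₀ ((exp_le_one_iff.2 (neg_nonpos.2 hA)).trans hC1) (by linarith))
    ((one_le_div hc).2 (hc1.trans (one_le_exp hB))) hT' hα
  exact exp_neg_div_bounds hc (hc.trans hcC) hJ hVα

/-- The W₂-geodesic between m = e^{-V} and f ∈ P_{c,C} stays in
P_{c',C'}: uniform two-sided bounds for the density of the displacement interpolation. -/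
theorem geodesic_stays_in_sandwich_class
    (V : ℝ → ℝ) (L : NNReal)
    (hVconv : ConvexOn ℝ Set.univ V)
    (hVlip : LipschitzWith L V)
    (hVC1 : ContDiff ℝ 1 V)
    (m : ℝ → ℝ) (hm : m = fun x => Real.exp (-V x))
    (hm_int : Integrable m) (hmass : ∫ x, m x = 1)
    (c C : ℝ) (hc : 0 < c) (hcC : c < C)
    (f : ℝ → ℝ) (hfcont : Continuous f) (hfpos : ∀ x, 0 < f x)
    (hf_int : Integrable f) (hfprob : ∫ x, f x = 1)
    (hfbounds : ∀ x : ℝ, c * m x ≤ f x ∧ f x ≤ C * m x)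
    (T : ℝ → ℝ) (hTmono : StrictMono T)
    (hTtransport : ∀ x : ℝ, (∫ y in Set.Iic (T x), f y) = ∫ y in Set.Iic x, m y)
    (hTC1 : ContDiff ℝ 1 T)
    (hMA : ∀ x : ℝ, deriv T x = m x / f (T x)) :
    ∃ c' C' : ℝ, 0 < c' ∧ c' < C' ∧
      ∀ α ∈ Set.Icc (0:ℝ) 1, ∀ x : ℝ,
        c' * Real.exp (-V ((1 - α) * x + α * T x)) ≤
            Real.exp (-V x) / ((1 - α) + α * deriv T x) ∧
        Real.exp (-V x) / ((1 - α) + α * deriv T x) ≤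
            C' * Real.exp (-V ((1 - α) * x + α * T x)) :=
  geodesic_stays_in_sandwich_class_general V hVconv m hm hm_int hmass c C hc hcC f hf_int hfprob
    hfbounds T hTtransport hMA
end
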